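/- The left dual A^* is a right A-module with action A^* ⊗ A ⟶ A^* given by the composite (eval_A ⊗ id_{A^*}) ∘ (id_{A^*} ⊗ m ⊗ id_{A^*}) ∘ (id_{A^*} ⊗ id_A ⊗ coev_A), with associators inserted as needed. For every right A-module M and every object X of C there is a bijection, natural in X and natural in M with respect to morphisms of right A-modules, between the set of right A-module morphisms X ⊗ M ⟶ A^* and the set Hom_C(X, M^*); in other words, M^* is an internal Hom object iHom_A(M, A^*) for the category of right A-modules. -/

import Mathlib

/-!
Let `C` be a rigid monoidal category and `A` a monoid object in `C`.  The dual `Aᘁ`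
is a right `A`-module via
`(eval_A ⊗ id) ∘ (id ⊗ m ⊗ id) ∘ (id ⊗ id ⊗ coev_A) : Aᘁ ⊗ A ⟶ Aᘁ`,
and for every right `A`-module `M` and every `X : C` there is a bijection, natural
in `X` and (contravariantly) in `M`, between right `A`-module morphisms
`X ⊗ M ⟶ Aᘁ` and `Hom(X, Mᘁ)`; that is, `Mᘁ` is an internal Hom object
`iHom_A(M, Aᘁ)`.

(Mathlib's right dual `Xᘁ`, with `ε_ X Xᘁ : Xᘁ ⊗ X ⟶ 𝟙` and
`η_ X Xᘁ : 𝟙 ⟶ X ⊗ Xᘁ`, plays the role of the paper's left dual `X^*`.)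
-/

open CategoryTheory MonoidalCategory

variable {C : Type*} [Category C] [MonoidalCategory C]

/-- A right module over a monoid object `A` in `C`. -/
structure RightMod (A : Mon C) where
  X : C
  act : X ⊗ A.X ⟶ X
  assoc : (act ▷ A.X) ≫ act = (α_ X A.X A.X).hom ≫ (X ◁ A.mon.mul) ≫ act
  unit : (X ◁ A.mon.one) ≫ act = (ρ_ X).hom

/-- A morphism of right `A`-modules. -/
def IsRightModHom {A : Mon C} (M N : RightMod A) (f : M.X ⟶ N.X) : Prop :=
  (f ▷ A.X) ≫ N.act = M.act ≫ f

section

variable [RigidCategory C] (A : Mon C)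

/-- The right `A`-action on `Aᘁ`:
`(eval_A ⊗ id) ∘ (id ⊗ m ⊗ id) ∘ (id ⊗ id ⊗ coev_A)`. -/
noncomputable def dualAction : A.Xᘁ ⊗ A.X ⟶ A.Xᘁ :=
  (ρ_ (A.Xᘁ ⊗ A.X)).inv ≫ ((A.Xᘁ ⊗ A.X) ◁ η_ A.X (A.Xᘁ)) ≫
    (α_ (A.Xᘁ) A.X (A.X ⊗ A.Xᘁ)).hom ≫ (A.Xᘁ ◁ (α_ A.X A.X (A.Xᘁ)).inv) ≫
    (A.Xᘁ ◁ (A.mon.mul ▷ A.Xᘁ)) ≫ (α_ (A.Xᘁ) A.X (A.Xᘁ)).inv ≫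
    (ε_ A.X (A.Xᘁ) ▷ A.Xᘁ) ≫ (λ_ (A.Xᘁ)).hom

/-- `f : X ⊗ M ⟶ Aᘁ` is a morphism of right `A`-modules, where `X ⊗ M` carries the
action `(α) ≫ (X ◁ act_M)` and `Aᘁ` carries the action `dualAction A`. -/
noncomputable def IsModHomToDual (X : C) (M : RightMod A) (f : X ⊗ M.X ⟶ A.Xᘁ) : Prop :=
  (f ▷ A.X) ≫ dualAction A = (α_ X M.X A.X).hom ≫ (X ◁ M.act) ≫ f

end

/-!
Currying along the duality pairing identifies `X ⟶ Mᘁ` with `X ⊗ M ⟶ 𝟙`. The module `Aᘁ` is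
cofree on `𝟙`: for every right `A`-module `N`, composing with evaluation at the unit of `A`
is a bijection from module maps `N ⟶ Aᘁ` to maps `N ⟶ 𝟙`, inverse to currying
`N ⊗ A ⟶ N ⟶ 𝟙`. Taking `N = X ⊗ M` gives the bijection, and both steps are natural in
module maps. After currying, the module axioms of `Aᘁ` become associativity and unitality
of the multiplication of `A`.
-/

section Duality

variable {W W' Y Y' : C}

noncomputable def homDualEquiv (W Y : C) [HasRightDual Y] : (W ⟶ Yᘁ) ≃ (W ⊗ Y ⟶ 𝟙_ C) :=
  ((tensorRightHomEquiv W Y Yᘁ (𝟙_ C)).trans (Iso.homCongr (Iso.refl W) (λ_ Yᘁ))).symm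

@[simp]
lemma homDualEquiv_apply [HasRightDual Y] (f : W ⟶ Yᘁ) :
    homDualEquiv W Y f = (f ▷ Y) ≫ ε_ Y Yᘁ := by
  dsimp [homDualEquiv, Iso.homCongr, tensorRightHomEquiv]
  monoidal

lemma homDualEquiv_comp [HasRightDual Y] (t : W' ⟶ W) (f : W ⟶ Yᘁ) :
    homDualEquiv W' Y (t ≫ f) = (t ▷ Y) ≫ homDualEquiv W Y f := by
  simp

lemma homDualEquiv_symm_comp [HasRightDual Y] (t : W' ⟶ W) (k : W ⊗ Y ⟶ 𝟙_ C) :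
    (homDualEquiv W' Y).symm ((t ▷ Y) ≫ k) = t ≫ (homDualEquiv W Y).symm k := by
  rw [Equiv.symm_apply_eq, homDualEquiv_comp, Equiv.apply_symm_apply]

lemma homDualEquiv_comp_rightAdjointMate [HasRightDual Y] [HasRightDual Y'] (f : W ⟶ Yᘁ)
    (h : Y' ⟶ Y) : homDualEquiv W Y' (f ≫ hᘁ) = (W ◁ h) ≫ homDualEquiv W Y f := by
  simp [rightAdjointMate_comp_evaluation, whisker_exchange_assoc]

end Duality

namespace RightMod

variable {A : Mon C}

abbrev tensorLeft (X : C) (M : RightMod A) : RightMod A where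
  X := X ⊗ M.X
  act := (α_ X M.X A.X).hom ≫ (X ◁ M.act)
  assoc := by
    rw [comp_whiskerRight, Category.assoc, associator_naturality_middle_assoc,
      ← MonoidalCategory.whiskerLeft_comp, M.assoc, associator_naturality_right_assoc,
      ← MonoidalCategory.whiskerLeft_comp]
    monoidal
  unit := by
    rw [associator_naturality_right_assoc, ← MonoidalCategory.whiskerLeft_comp, M.unit]
    monoidal

lemma isRightModHom_tensorLeft_whiskerRight {X X' : C} (t : X' ⟶ X) (M : RightMod A) :
    IsRightModHom (M.tensorLeft X') (M.tensorLeft X) (t ▷ M.X) := by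
  rw [IsRightModHom, associator_naturality_left_assoc, ← whisker_exchange, Category.assoc]

lemma isRightModHom_tensorLeft_whiskerLeft (X : C) {M M' : RightMod A} {h : M'.X ⟶ M.X}
    (hh : IsRightModHom M' M h) :
    IsRightModHom (M'.tensorLeft X) (M.tensorLeft X) (X ◁ h) := by
  rw [IsRightModHom, associator_naturality_middle_assoc, ← MonoidalCategory.whiskerLeft_comp, hh,
    MonoidalCategory.whiskerLeft_comp, Category.assoc]

end RightMod

section

variable [RigidCategory C] (A : Mon C)

noncomputable def evalOne : A.Xᘁ ⟶ 𝟙_ C :=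
  (ρ_ A.Xᘁ).inv ≫ (A.Xᘁ ◁ A.mon.one) ≫ ε_ A.X A.Xᘁ

lemma comp_evalOne {W : C} (f : W ⟶ A.Xᘁ) :
    f ≫ evalOne A = (ρ_ W).inv ≫ (W ◁ A.mon.one) ≫ homDualEquiv W A.X f := by
  rw [evalOne, homDualEquiv_apply, whisker_exchange_assoc, rightUnitor_inv_naturality_assoc]

lemma homDualEquiv_dualAction :
    homDualEquiv _ A.X (dualAction A) =
      (α_ A.Xᘁ A.X A.X).hom ≫ (A.Xᘁ ◁ A.mon.mul) ≫ ε_ A.X A.Xᘁ := by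
  rw [← Equiv.eq_symm_apply]
  dsimp [homDualEquiv, tensorRightHomEquiv, Iso.homCongr, dualAction]
  monoidal

lemma homDualEquiv_whiskerRight_comp_dualAction {W : C} (f : W ⟶ A.Xᘁ) :
    homDualEquiv _ A.X ((f ▷ A.X) ≫ dualAction A) =
      (α_ W A.X A.X).hom ≫ (W ◁ A.mon.mul) ≫ homDualEquiv W A.X f := by
  rw [homDualEquiv_comp, homDualEquiv_dualAction, associator_naturality_left_assoc,
    ← whisker_exchange_assoc, homDualEquiv_apply]

lemma dualAction_assoc : (dualAction A ▷ A.X) ≫ dualAction A =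
    (α_ A.Xᘁ A.X A.X).hom ≫ (A.Xᘁ ◁ A.mon.mul) ≫ dualAction A := by
  apply (homDualEquiv _ A.X).injective
  rw [homDualEquiv_whiskerRight_comp_dualAction, homDualEquiv_comp, homDualEquiv_comp,
    homDualEquiv_dualAction, associator_naturality_right_assoc, associator_naturality_middle_assoc,
    ← MonoidalCategory.whiskerLeft_comp_assoc, ← MonoidalCategory.whiskerLeft_comp_assoc,
    MonObj.mul_assoc]
  monoidal

lemma dualAction_unit : (A.Xᘁ ◁ A.mon.one) ≫ dualAction A = (ρ_ A.Xᘁ).hom := by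
  apply (homDualEquiv _ A.X).injective
  rw [homDualEquiv_comp, homDualEquiv_dualAction, homDualEquiv_apply,
    associator_naturality_middle_assoc, ← MonoidalCategory.whiskerLeft_comp_assoc, MonObj.one_mul]
  monoidal

lemma dualAction_comp_evalOne : dualAction A ≫ evalOne A = ε_ A.X A.Xᘁ := by
  rw [comp_evalOne, homDualEquiv_dualAction, associator_naturality_right_assoc,
    ← MonoidalCategory.whiskerLeft_comp_assoc, MonObj.mul_one]
  monoidal

noncomputable abbrev dualMod : RightMod A :=
  ⟨A.Xᘁ, dualAction A, dualAction_assoc A, dualAction_unit A⟩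

variable {A}

noncomputable def dualModLift (N : RightMod A) (k : N.X ⟶ 𝟙_ C) : N.X ⟶ A.Xᘁ :=
  (homDualEquiv N.X A.X).symm (N.act ≫ k)

lemma isRightModHom_dualModLift (N : RightMod A) (k : N.X ⟶ 𝟙_ C) :
    IsRightModHom N (dualMod A) (dualModLift N k) := by
  apply (homDualEquiv _ A.X).injective
  rw [homDualEquiv_whiskerRight_comp_dualAction, homDualEquiv_comp, dualModLift,
    Equiv.apply_symm_apply, reassoc_of% N.assoc]

lemma dualModLift_comp_evalOne (N : RightMod A) (k : N.X ⟶ 𝟙_ C) :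
    dualModLift N k ≫ evalOne A = k := by
  rw [comp_evalOne, dualModLift, Equiv.apply_symm_apply, ← Category.assoc (N.X ◁ _), N.unit,
    Iso.inv_hom_id_assoc]

lemma dualModLift_comp_evalOne_of_isRightModHom {N : RightMod A} {f : N.X ⟶ A.Xᘁ}
    (hf : IsRightModHom N (dualMod A) f) : dualModLift N (f ≫ evalOne A) = f := by
  rw [dualModLift, Equiv.symm_apply_eq, ← Category.assoc, ← hf, Category.assoc,
    dualAction_comp_evalOne, homDualEquiv_apply]

lemma dualModLift_comp {N N' : RightMod A} {φ : N'.X ⟶ N.X} (hφ : IsRightModHom N' N φ)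
    (k : N.X ⟶ 𝟙_ C) : dualModLift N' (φ ≫ k) = φ ≫ dualModLift N k := by
  rw [dualModLift, ← Category.assoc, ← hφ, Category.assoc, homDualEquiv_symm_comp, dualModLift]

noncomputable def dualModHomEquiv (N : RightMod A) :
    (N.X ⟶ 𝟙_ C) ≃ { f : N.X ⟶ A.Xᘁ // IsRightModHom N (dualMod A) f } where
  toFun k := ⟨dualModLift N k, isRightModHom_dualModLift N k⟩
  invFun f := f.1 ≫ evalOne A
  left_inv := dualModLift_comp_evalOne N
  right_inv f := Subtype.ext (dualModLift_comp_evalOne_of_isRightModHom f.2)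

variable (A)

lemma isModHomToDual_iff (X : C) (M : RightMod A) (f : X ⊗ M.X ⟶ A.Xᘁ) :
    IsModHomToDual A X M f ↔ IsRightModHom (M.tensorLeft X) (dualMod A) f := by
  rw [IsModHomToDual, IsRightModHom, Category.assoc]

noncomputable def internalHomEquiv (X : C) (M : RightMod A) :
    (X ⟶ M.Xᘁ) ≃ { f : X ⊗ M.X ⟶ A.Xᘁ // IsModHomToDual A X M f } :=
  ((homDualEquiv X M.X).trans (dualModHomEquiv (M.tensorLeft X))).trans
    (Equiv.subtypeEquivRight fun f => (isModHomToDual_iff A X M f).symm)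

lemma internalHomEquiv_apply_coe (X : C) (M : RightMod A) (g : X ⟶ M.Xᘁ) :
    (internalHomEquiv A X M g).1 = dualModLift (M.tensorLeft X) (homDualEquiv X M.X g) :=
  rfl

/-- `Aᘁ` is a right `A`-module via `dualAction`, and `Mᘁ` is an internal Hom object
`iHom_A(M, Aᘁ)`: there is a bijection, natural in `X` and natural (contravariantly,
via right adjoint mates) in `M` with respect to module morphisms, between
`Hom(X, Mᘁ)` and the right `A`-module morphisms `X ⊗ M ⟶ Aᘁ`. -/
theorem dual_is_module_and_internal_hom :
    ((dualAction A ▷ A.X) ≫ dualAction A =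
      (α_ (A.Xᘁ) A.X A.X).hom ≫ (A.Xᘁ ◁ A.mon.mul) ≫ dualAction A) ∧
    ((A.Xᘁ ◁ A.mon.one) ≫ dualAction A = (ρ_ (A.Xᘁ)).hom) ∧
    ∃ e : ∀ (X : C) (M : RightMod A),
        (X ⟶ M.Xᘁ) ≃ { f : X ⊗ M.X ⟶ A.Xᘁ // IsModHomToDual A X M f },
      (∀ (X X' : C) (t : X' ⟶ X) (M : RightMod A) (g : X ⟶ M.Xᘁ),
        ((e X' M (t ≫ g)).1 : X' ⊗ M.X ⟶ A.Xᘁ) = (t ▷ M.X) ≫ (e X M g).1) ∧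
      (∀ (X : C) (M M' : RightMod A) (h : M'.X ⟶ M.X), IsRightModHom M' M h →
        ∀ g : X ⟶ M.Xᘁ,
          ((e X M' (g ≫ hᘁ)).1 : X ⊗ M'.X ⟶ A.Xᘁ) = (X ◁ h) ≫ (e X M g).1) := by
  refine ⟨dualAction_assoc A, dualAction_unit A, internalHomEquiv A, ?_, ?_⟩
  · intro X X' t M g
    rw [internalHomEquiv_apply_coe, internalHomEquiv_apply_coe, homDualEquiv_comp,
      dualModLift_comp (M.isRightModHom_tensorLeft_whiskerRight t)]
  · intro X M M' h hh g
    rw [internalHomEquiv_apply_coe, internalHomEquiv_apply_coe,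
      homDualEquiv_comp_rightAdjointMate,
      dualModLift_comp (RightMod.isRightModHom_tensorLeft_whiskerLeft X hh)]

end
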